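/- Let a₀ > 0, a₁ > 0, a₂ > 0, and β > γ > 1. If a₁ > (γ/β) · a₂^{β/γ} / a₀^{(β−γ)/γ}, then a₀ · a₁^{γ/(β−γ)} > a₂^{β/(β−γ)} · ((γ/β)^{γ/(β−γ)} − (γ/β)^{β/(β−γ)}); in particular, −a₀ − a₁ z^β + a₂ z^γ < 0 for all z ∈ [0,+∞). -/

import Mathlib

open Set Filter

/-- Signed power: `⌊x⌉^a = sign(x) * |x|^a`. -/
noncomputable def spow (x a : ℝ) : ℝ := Real.sign x * |x| ^ a

/-- Dilation `Λ_r(l, x) = (l^{r₁} x₁, …, l^{rₙ} xₙ)`. -/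
noncomputable def dil {n : ℕ} (r : Fin n → ℝ) (l : ℝ) (x : Fin n → ℝ) : Fin n → ℝ :=
  fun i => l ^ r i * x i

/-- `x` is a solution of `ẋ = F(x)` on `[s, ∞)`. -/
def IsSolOn {E : Type*} [NormedAddCommGroup E] [NormedSpace ℝ E]
    (F : E → E) (x : ℝ → E) (s : ℝ) : Prop :=
  ∀ t ∈ Set.Ici s, HasDerivWithinAt x (F (x t)) (Set.Ici s) t

/-- The origin is (locally) asymptotically stable for `ẋ = F(x)`. -/
def AsympStable {E : Type*} [NormedAddCommGroup E] [NormedSpace ℝ E] (F : E → E) : Prop :=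
  (∀ ε > 0, ∃ η > 0, ∀ x : ℝ → E, IsSolOn F x 0 → ‖x 0‖ < η → ∀ t ≥ 0, ‖x t‖ < ε) ∧
  (∃ δ > 0, ∀ x : ℝ → E, IsSolOn F x 0 → ‖x 0‖ < δ →
    Filter.Tendsto x Filter.atTop (nhds 0))

/-- The origin is small-time stable for `ẋ = F(x)`. -/
def SmallTimeStable {E : Type*} [NormedAddCommGroup E] [NormedSpace ℝ E] (F : E → E) : Prop :=
  ∀ ε > 0, ∃ η > 0, ∀ x : ℝ → E, IsSolOn F x 0 → ‖x 0‖ < η →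
    x ε = 0 ∧ ∀ t ≥ 0, ‖x t‖ < ε

/-!
Put `θ = γ/β ∈ (0, 1)`. After raising to the power `θ`, the hypothesis says
`a₂ < (a₁/θ)^θ a₀^(1-θ)`; raising this to the power `1/(1-θ)` gives the first claim.
For the second, weighted AM–GM with weights `θ, 1-θ` bounds
`(a₁/θ)^θ a₀^(1-θ) z^γ = (a₁ z^β/θ)^θ a₀^(1-θ)` by `a₁ z^β + (1-θ) a₀ < a₁ z^β + a₀`.
-/

open Real

section
variable {θ a₀ a₁ a₂ : ℝ}

theorem lt_div_rpow_mul_rpow_one_sub (hθ : 0 < θ) (h₀ : 0 < a₀) (h₁ : 0 ≤ a₁) (h₂ : 0 ≤ a₂)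
    (h : θ * a₂ ^ (1 / θ) / a₀ ^ ((1 - θ) / θ) < a₁) :
    a₂ < (a₁ / θ) ^ θ * a₀ ^ (1 - θ) := by
  rw [div_lt_iff₀ (rpow_pos_of_pos h₀ _)] at h
  have h' : a₂ ^ (1 / θ) < a₁ / θ * a₀ ^ ((1 - θ) / θ) := by
    rw [div_mul_eq_mul_div, lt_div_iff₀ hθ]
    linarith
  calc a₂ = (a₂ ^ (1 / θ)) ^ θ := by rw [← rpow_mul h₂, one_div_mul_cancel hθ.ne', rpow_one]
    _ < (a₁ / θ * a₀ ^ ((1 - θ) / θ)) ^ θ := by gcongr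
    _ = (a₁ / θ) ^ θ * a₀ ^ (1 - θ) := by
      rw [mul_rpow (by positivity) (by positivity), ← rpow_mul h₀.le, div_mul_cancel₀ _ hθ.ne']

theorem rpow_mul_rpow_one_div_one_sub_lt (hθ₀ : 0 < θ) (hθ₁ : θ < 1) (h₀ : 0 ≤ a₀)
    (h₁ : 0 ≤ a₁) (h₂ : 0 ≤ a₂) (h : a₂ < (a₁ / θ) ^ θ * a₀ ^ (1 - θ)) :
    θ ^ (θ / (1 - θ)) * a₂ ^ (1 / (1 - θ)) < a₀ * a₁ ^ (θ / (1 - θ)) := by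
  have hθ₁' : 0 < 1 - θ := sub_pos.2 hθ₁
  calc θ ^ (θ / (1 - θ)) * a₂ ^ (1 / (1 - θ))
      < θ ^ (θ / (1 - θ)) * ((a₁ / θ) ^ θ * a₀ ^ (1 - θ)) ^ (1 / (1 - θ)) := by gcongr
    _ = θ ^ (θ / (1 - θ)) * ((a₁ / θ) ^ (θ / (1 - θ)) * a₀) := by
      rw [mul_rpow (by positivity) (by positivity), ← rpow_mul (by positivity), ← rpow_mul h₀,
        mul_one_div, mul_one_div_cancel hθ₁'.ne', rpow_one]
    _ = a₀ * a₁ ^ (θ / (1 - θ)) := by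
      rw [div_rpow h₁ hθ₀.le]
      field_simp [(rpow_pos_of_pos hθ₀ (θ / (1 - θ))).ne']

theorem div_rpow_mul_rpow_one_sub_mul_rpow_le (hθ₀ : 0 < θ) (hθ₁ : θ ≤ 1) (h₀ : 0 ≤ a₀)
    (h₁ : 0 ≤ a₁) {x : ℝ} (hx : 0 ≤ x) :
    (a₁ / θ) ^ θ * a₀ ^ (1 - θ) * x ^ θ ≤ a₁ * x + (1 - θ) * a₀ := by
  have amgm := geom_mean_le_arith_mean2_weighted hθ₀.le (sub_nonneg.2 hθ₁)
    (div_nonneg (mul_nonneg h₁ hx) hθ₀.le) h₀ (add_sub_cancel θ 1)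
  rwa [mul_div_cancel₀ _ hθ₀.ne', mul_div_right_comm, mul_rpow (by positivity) hx,
    mul_right_comm] at amgm

theorem neg_sub_mul_add_mul_rpow_neg (hθ₀ : 0 < θ) (hθ₁ : θ ≤ 1) (h₀ : 0 < a₀) (h₁ : 0 ≤ a₁)
    (h : a₂ ≤ (a₁ / θ) ^ θ * a₀ ^ (1 - θ)) {x : ℝ} (hx : 0 ≤ x) :
    -a₀ - a₁ * x + a₂ * x ^ θ < 0 := by
  calc -a₀ - a₁ * x + a₂ * x ^ θ
      ≤ -a₀ - a₁ * x + (a₁ / θ) ^ θ * a₀ ^ (1 - θ) * x ^ θ := by gcongr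
    _ ≤ -a₀ - a₁ * x + (a₁ * x + (1 - θ) * a₀) := by
      gcongr
      exact div_rpow_mul_rpow_one_sub_mul_rpow_le hθ₀ hθ₁ h₀.le h₁ hx
    _ < 0 := by nlinarith

end

theorem stmt15 (a₀ a₁ a₂ β γ : ℝ) (h₀ : 0 < a₀) (h₁ : 0 < a₁) (h₂ : 0 < a₂)
    (hβγ : γ < β) (hγ : 1 < γ)
    (h : γ/β * a₂ ^ (β/γ) / a₀ ^ ((β-γ)/γ) < a₁) :
    a₂ ^ (β/(β-γ)) * ((γ/β) ^ (γ/(β-γ)) - (γ/β) ^ (β/(β-γ))) < a₀ * a₁ ^ (γ/(β-γ)) ∧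
      ∀ z ∈ Set.Ici (0:ℝ), -a₀ - a₁ * z ^ β + a₂ * z ^ γ < 0 := by
  have hβ₀ : 0 < β := (zero_lt_one.trans hγ).trans hβγ
  set θ := γ / β with hθ
  have hθ₀ : 0 < θ := div_pos (zero_lt_one.trans hγ) hβ₀
  have hθ₁ : θ < 1 := (div_lt_one hβ₀).2 hβγ
  have h1θ : 1 - θ = (β - γ) / β := by rw [hθ]; field_simp
  rw [show β / γ = 1 / θ by rw [hθ, one_div_div],
    show (β - γ) / γ = (1 - θ) / θ by rw [h1θ, hθ, div_div_div_cancel_right₀ hβ₀.ne']] at h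
  rw [show γ / (β - γ) = θ / (1 - θ) by rw [h1θ, hθ, div_div_div_cancel_right₀ hβ₀.ne'],
    show β / (β - γ) = 1 / (1 - θ) by rw [h1θ, one_div_div]]
  have hc := lt_div_rpow_mul_rpow_one_sub hθ₀ h₀ h₁.le h₂.le h
  refine ⟨?_, fun z hz => ?_⟩
  · calc a₂ ^ (1 / (1 - θ)) * (θ ^ (θ / (1 - θ)) - θ ^ (1 / (1 - θ)))
        < θ ^ (θ / (1 - θ)) * a₂ ^ (1 / (1 - θ)) := by
          nlinarith [rpow_pos_of_pos hθ₀ (1 / (1 - θ)), rpow_pos_of_pos h₂ (1 / (1 - θ))]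
      _ < a₀ * a₁ ^ (θ / (1 - θ)) :=
          rpow_mul_rpow_one_div_one_sub_lt hθ₀ hθ₁ h₀.le h₁.le h₂.le hc
  · have hz : 0 ≤ z := hz
    rw [show z ^ γ = (z ^ β) ^ θ by rw [← rpow_mul hz, mul_div_cancel₀ _ hβ₀.ne']]
    exact neg_sub_mul_add_mul_rpow_neg hθ₀ hθ₁.le h₀ h₁.le hc.le (rpow_nonneg hz β)
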